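/- (Pilotfish Determinism.) Let L₁ and L₂ be two permutations of all transactions of Fin n, each of which lists every pair of conflicting transactions in increasing index order (for all i j with i < j and i, j conflicting, i occurs strictly before j). Then the sequential executions of L₁ and L₂ from the same initial state σ₀ yield the same final state. -/

import Mathlib

open List


/-- Transactions `i` and `j` *conflict* if some object is referenced by both and
written by at least one of them. -/
def Conflict {n : ℕ} {Obj : Type*} [DecidableEq Obj] (R W : Fin n → Finset Obj) (i j : Fin n) : Prop :=
  ∃ oid : Obj, oid ∈ R i ∪ W i ∧ oid ∈ R j ∪ W j ∧ (oid ∈ W i ∨ oid ∈ W j)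

section Aux

variable {n : ℕ} {Obj V : Type*} [DecidableEq Obj]

lemma conflict_symm {R W : Fin n → Finset Obj} {i j : Fin n}
    (h : Conflict R W i j) : Conflict R W j i := by
  obtain ⟨o, h1, h2, h3⟩ := h
  exact ⟨o, h2, h1, h3.symm⟩

/-- Non-conflicting transactions commute. -/
lemma exec_comm (R W : Fin n → Finset Obj)
    (exec : Fin n → (Obj → V) → (Obj → V))
    (hmod : ∀ (t : Fin n) (σ : Obj → V) (oid : Obj), oid ∉ W t → exec t σ oid = σ oid)
    (hdet : ∀ (t : Fin n) (σ σ' : Obj → V),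
      (∀ oid ∈ R t ∪ W t, σ oid = σ' oid) → ∀ oid ∈ W t, exec t σ oid = exec t σ' oid)
    {a b : Fin n} (h : ¬ Conflict R W a b) (σ : Obj → V) :
    exec a (exec b σ) = exec b (exec a σ) := by
  funext oid
  by_cases ha : oid ∈ W a
  · have hb : oid ∉ W b := fun hb =>
      h ⟨oid, Finset.mem_union_right _ ha, Finset.mem_union_right _ hb, Or.inl ha⟩
    rw [hmod b _ _ hb]
    refine hdet a _ _ (fun o ho => hmod b _ _ fun hob =>
      h ⟨o, ho, Finset.mem_union_right _ hob, Or.inr hob⟩) _ ha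
  · by_cases hb : oid ∈ W b
    · have hna : oid ∉ W a := ha
      rw [hmod a _ _ hna]
      refine (hdet b _ _ (fun o ho => (hmod a _ _ fun hoa =>
        h ⟨o, Finset.mem_union_right _ hoa, ho, Or.inl hoa⟩).symm) _ hb)
    · rw [hmod a _ _ ha, hmod b _ _ hb, hmod b _ _ hb, hmod a _ _ ha]

lemma fold_comm_of_all (exec : Fin n → (Obj → V) → (Obj → V)) (t : Fin n)
    (l : List (Fin n)) (hc : ∀ x ∈ l, ∀ σ, exec t (exec x σ) = exec x (exec t σ))
    (σ : Obj → V) :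
    exec t (l.foldl (fun σ t => exec t σ) σ) = l.foldl (fun σ t => exec t σ) (exec t σ) := by
  induction l generalizing σ with
  | nil => rfl
  | cons x l ih =>
    simp only [List.foldl_cons]
    rw [ih (fun y hy => hc y (List.mem_cons_of_mem _ hy)), hc x (List.mem_cons_self)]

lemma sublist_idx {α : Type*} [DecidableEq α] {a b : α} {L : List α}
    (hnd : L.Nodup) (h : [a, b] <+ L) : L.idxOf a < L.idxOf b := by
  induction L with
  | nil => simp at h
  | cons c L ih =>
    rcases h with _ | @⟨_, _, _, h⟩ | @⟨_, _, _, h⟩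
    · -- [a,b] <+ L (cons case)
      have ha : a ∈ L := h.subset (by simp)
      have hb : b ∈ L := h.subset (by simp)
      have hac : a ≠ c := fun e => (List.nodup_cons.1 hnd).1 (e ▸ ha)
      have hbc : b ≠ c := fun e => (List.nodup_cons.1 hnd).1 (e ▸ hb)
      rw [List.idxOf_cons_ne _ (Ne.symm hac), List.idxOf_cons_ne _ hbc.symm]
      exact Nat.succ_lt_succ (ih (List.nodup_cons.1 hnd).2 h)
    · -- c = a, [b] <+ L
      have hb : b ∈ L := h.subset (by simp)
      have hba : b ≠ a := fun e => (List.nodup_cons.1 hnd).1 (e ▸ hb)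
      rw [List.idxOf_cons_self, List.idxOf_cons_ne _ hba.symm]
      exact Nat.succ_pos _

lemma idx_sublist {α : Type*} [DecidableEq α] {a b : α} {L : List α}
    (hnd : L.Nodup) (ha : a ∈ L) (hb : b ∈ L) (h : L.idxOf a < L.idxOf b) :
    [a, b] <+ L := by
  induction L with
  | nil => simp at ha
  | cons c L ih =>
    by_cases hac : a = c
    · subst hac
      have hba : b ≠ a := by
        intro e; subst e; exact lt_irrefl _ h
      have hbL : b ∈ L := by
        rcases List.mem_cons.1 hb with e | hbL
        · exact absurd e hba
        · exact hbL
      exact (List.singleton_sublist.2 hbL).cons₂ a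
    · have hbc : b ≠ c := by
        intro e; subst e
        rw [List.idxOf_cons_self] at h
        exact Nat.not_lt_zero _ h
      have haL : a ∈ L := by
        rcases List.mem_cons.1 ha with e | h'
        · exact absurd e hac
        · exact h'
      have hbL : b ∈ L := by
        rcases List.mem_cons.1 hb with e | h'
        · exact absurd e hbc
        · exact h'
      rw [List.idxOf_cons_ne _ (Ne.symm hac), List.idxOf_cons_ne _ hbc.symm] at h
      exact (ih (List.nodup_cons.1 hnd).2 haL hbL (Nat.lt_of_succ_lt_succ h)).cons c

lemma main_aux (R W : Fin n → Finset Obj)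
    (exec : Fin n → (Obj → V) → (Obj → V))
    (hmod : ∀ (t : Fin n) (σ : Obj → V) (oid : Obj), oid ∉ W t → exec t σ oid = σ oid)
    (hdet : ∀ (t : Fin n) (σ σ' : Obj → V),
      (∀ oid ∈ R t ∪ W t, σ oid = σ' oid) → ∀ oid ∈ W t, exec t σ oid = exec t σ' oid)
    (L₁ : List (Fin n)) :
    ∀ (L₂ : List (Fin n)), L₁ ~ L₂ → L₁.Nodup →
    (∀ a b : Fin n, Conflict R W a b → [a, b] <+ L₁ → [a, b] <+ L₂) →
    ∀ σ : Obj → V,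
      L₁.foldl (fun σ t => exec t σ) σ = L₂.foldl (fun σ t => exec t σ) σ := by
  induction L₁ with
  | nil =>
    intro L₂ hp _ _ σ
    rw [hp.nil_eq]
  | cons t L₁ ih =>
    intro L₂ hp hnd hsub σ
    have hnd₂ : L₂.Nodup := hp.nodup_iff.1 hnd
    have htL₂ : t ∈ L₂ := hp.subset (List.mem_cons_self)
    obtain ⟨l1, l2, htl1, hL₂, herase⟩ := List.exists_erase_eq htL₂
    -- every element of l1 does not conflict with t
    have hcomm : ∀ x ∈ l1, ∀ σ, exec t (exec x σ) = exec x (exec t σ) := by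
      intro x hx σ'
      have hxt : x ≠ t := fun e => htl1 (e ▸ hx)
      have hxL₂ : [x, t] <+ L₂ := by
        rw [hL₂]
        exact ((List.singleton_sublist.2 hx).append
          (List.singleton_sublist.2 (List.mem_cons_self)))
      by_cases hconf : Conflict R W t x
      · exfalso
        have hxL₁ : x ∈ L₁ := by
          have : x ∈ t :: L₁ := hp.symm.subset (hL₂ ▸ (by simp [hx] : x ∈ l1 ++ t :: l2))
          rcases List.mem_cons.1 this with e | h'
          · exact absurd e hxt
          · exact h'
        have h1 : [t, x] <+ t :: L₁ := (List.singleton_sublist.2 hxL₁).cons₂ t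
        have h2 : [t, x] <+ L₂ := hsub t x hconf h1
        exact lt_asymm (sublist_idx hnd₂ h2) (sublist_idx hnd₂ hxL₂)
      · exact exec_comm R W exec hmod hdet hconf σ'
    -- move t to the front of L₂
    have hmove : L₂.foldl (fun σ t => exec t σ) σ
        = (l1 ++ l2).foldl (fun σ t => exec t σ) (exec t σ) := by
      rw [hL₂]
      simp only [List.foldl_append, List.foldl_cons]
      congr 1
      exact fold_comm_of_all exec t l1 hcomm σ
    rw [hmove, List.foldl_cons]
    -- apply IH
    have hperm : L₁ ~ l1 ++ l2 := by
      have : t :: L₁ ~ t :: (l1 ++ l2) := by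
        rw [← herase]
        exact hp.trans (List.perm_cons_erase htL₂)
      exact this.cons_inv
    refine ih (l1 ++ l2) hperm (List.nodup_cons.1 hnd).2 ?_ (exec t σ)
    intro a b hconf hab
    have haL₁ : a ∈ L₁ := hab.subset (by simp)
    have hbL₁ : b ∈ L₁ := hab.subset (by simp)
    have hat : a ≠ t := fun e => (List.nodup_cons.1 hnd).1 (e ▸ haL₁)
    have hbt : b ≠ t := fun e => (List.nodup_cons.1 hnd).1 (e ▸ hbL₁)
    have h2 : [a, b] <+ L₂ := hsub a b hconf (hab.cons t)
    have h3 : [a, b] <+ L₂.erase t := by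
      have := h2.erase t
      rwa [List.erase_of_not_mem (by simp [Ne.symm hat, Ne.symm hbt])] at this
    rwa [herase] at h3

end Aux

/-- **Pilotfish Determinism.** Any two permutations of all transactions that list each
pair of conflicting transactions in increasing index order yield the same final state
when executed sequentially from the same initial state. -/
theorem pilotfish_determinism {n : ℕ} {Obj V : Type*} [DecidableEq Obj]
    (R W : Fin n → Finset Obj) (hRW : ∀ t : Fin n, Disjoint (R t) (W t))
    (exec : Fin n → (Obj → V) → (Obj → V))
    (hmod : ∀ (t : Fin n) (σ : Obj → V) (oid : Obj), oid ∉ W t → exec t σ oid = σ oid)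
    (hdet : ∀ (t : Fin n) (σ σ' : Obj → V),
      (∀ oid ∈ R t ∪ W t, σ oid = σ' oid) → ∀ oid ∈ W t, exec t σ oid = exec t σ' oid)
    (L₁ L₂ : List (Fin n))
    (hnodup₁ : L₁.Nodup) (hall₁ : ∀ t : Fin n, t ∈ L₁)
    (hnodup₂ : L₂.Nodup) (hall₂ : ∀ t : Fin n, t ∈ L₂)
    (horder₁ : ∀ i j : Fin n, i < j → Conflict R W i j → L₁.idxOf i < L₁.idxOf j)
    (horder₂ : ∀ i j : Fin n, i < j → Conflict R W i j → L₂.idxOf i < L₂.idxOf j)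
    (σ₀ : Obj → V) :
    L₁.foldl (fun σ t => exec t σ) σ₀ = L₂.foldl (fun σ t => exec t σ) σ₀ := by
  have hperm : L₁ ~ L₂ :=
    (List.perm_ext_iff_of_nodup hnodup₁ hnodup₂).2 (fun t => ⟨fun _ => hall₂ t, fun _ => hall₁ t⟩)
  refine main_aux R W exec hmod hdet L₁ L₂ hperm hnodup₁ ?_ σ₀
  intro a b hconf hab
  have hidx : L₁.idxOf a < L₁.idxOf b := sublist_idx hnodup₁ hab
  have hne : a ≠ b := by
    rintro rfl; exact lt_irrefl _ hidx
  rcases lt_or_gt_of_ne hne with hlt | hgt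
  · exact idx_sublist hnodup₂ (hall₂ a) (hall₂ b) (horder₂ a b hlt hconf)
  · exact absurd (horder₁ b a hgt (conflict_symm hconf)) (Nat.lt_asymm hidx)
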